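/- Let $V$ be a finite-dimensional vector space of dimension $n$ and let $T_1,\dots,T_l \in \mathrm{End}(V)$. Extend each $T_i$ to $\wedge^* V$ as a derivation, and define the supertrace $\mathrm{str}(S) = \sum_{k=0}^n (-1)^k \mathrm{Tr}(S|_{\wedge^k V})$. If $l < n$, then $\mathrm{str}(T_1 T_2 \cdots T_l) = 0$. -/

import Mathlib

/-- The supertrace of an endomorphism of the exterior algebra: the trace composed with
the grade involution (which acts by `(-1)^k` on the degree-`k` component), so that for a
grading-preserving `S` it equals `∑ k, (-1)^k Tr (S|_{⋀^k V})`. -/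
noncomputable def supertrace (V : Type*) [AddCommGroup V] [Module ℝ V]
    (S : Module.End ℝ (ExteriorAlgebra ℝ V)) : ℝ :=
  LinearMap.trace ℝ (ExteriorAlgebra ℝ V)
    ((CliffordAlgebra.involute (Q := (0 : QuadraticForm ℝ V))).toLinearMap ∘ₗ S)

/-!
Writing `ε(v)` for left multiplication by `v` and `a(φ)` for contraction with `φ ∈ V^*`, the
derivation extending `T` is `∑ₚ ε(T eₚ) a(eₚ^*)` for any basis `(eₚ)`. Expanding the product of
`l < n` such sums, every monomial `A` misses some index `j`, so `A` is even and commutes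
with `ε = ε(e_j)`. With `a = a(e_j^*)` we have `1 = a ε + ε a`, and the supertrace is graded
cyclic, so `str A = str (A a ε) + str (A ε a) = -str (ε A a) + str (A ε a) = 0`.
-/

theorem List.prod_ofFn_sum {R ι : Type*} [Semiring R] [Fintype ι] {l : ℕ}
    (A : Fin l → ι → R) :
    (List.ofFn fun i => ∑ q, A i q).prod =
      ∑ f : Fin l → ι, (List.ofFn fun i => A i (f i)).prod := by
  induction l with
  | zero => simp
  | succ l ih =>
    rw [List.ofFn_succ, List.prod_cons, ih, Finset.sum_mul_sum, ← Fintype.sum_prod_type']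
    refine Fintype.sum_equiv (Fin.consEquiv fun _ => ι) _ _ fun p => ?_
    simp [Fin.consEquiv, List.ofFn_succ]

theorem commute_mul_of_anticommute {A : Type*} [Ring A] {a x y : A}
    (hx : a * x = -(x * a)) (hy : a * y = -(y * a)) : Commute a (x * y) := by
  rw [Commute, SemiconjBy, ← mul_assoc, hx, neg_mul, mul_assoc, hy, mul_neg, neg_neg, mul_assoc]

theorem CliffordAlgebra.involute_contractLeft {R M : Type*} [CommRing R] [AddCommGroup M]
    [Module R M] {Q : QuadraticForm R M} (d : Module.Dual R M) (x : CliffordAlgebra Q) :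
    involute (contractLeft d x) = -contractLeft d (involute x) := by
  induction x using CliffordAlgebra.left_induction with
  | algebraMap r => simp [contractLeft_algebraMap]
  | add x y hx hy => simp only [map_add, hx, hy, neg_add]
  | ι_mul x m hx =>
    simp only [contractLeft_ι_mul, map_sub, map_smul, map_mul, involute_ι, hx, neg_mul,
      map_neg, mul_neg, neg_neg, neg_sub]

namespace ExteriorAlgebra

variable {R M : Type*} [CommRing R] [AddCommGroup M] [Module R M]

noncomputable def creation : M →ₗ[R] Module.End R (ExteriorAlgebra R M) :=
  (LinearMap.mul R (ExteriorAlgebra R M)).comp (ι R)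

noncomputable def annihilation : Module.Dual R M →ₗ[R] Module.End R (ExteriorAlgebra R M) :=
  CliffordAlgebra.contractLeft

variable (R M) in
noncomputable def gradeInvolution : Module.End R (ExteriorAlgebra R M) :=
  CliffordAlgebra.involute.toLinearMap

theorem creation_apply (v : M) (x : ExteriorAlgebra R M) : creation v x = ι R v * x := rfl

theorem annihilation_apply (d : Module.Dual R M) (x : ExteriorAlgebra R M) :
    annihilation d x = CliffordAlgebra.contractLeft d x := rfl

theorem creation_mul_creation (v w : M) :
    creation v * creation w = -(creation w * creation v : Module.End R (ExteriorAlgebra R M)) := by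
  refine LinearMap.ext fun x => ?_
  simp only [Module.End.mul_apply, LinearMap.neg_apply, creation_apply, ← mul_assoc,
    eq_neg_of_add_eq_zero_left (ι_add_mul_swap v w), neg_mul]

theorem annihilation_mul_creation (d : Module.Dual R M) (v : M) :
    annihilation d * creation v = d v • 1 - creation v * annihilation d :=
  LinearMap.ext (CliffordAlgebra.contractLeft_ι_mul d v)

theorem gradeInvolution_mul_creation (v : M) :
    gradeInvolution R M * creation v = -(creation v * gradeInvolution R M) := by
  refine LinearMap.ext fun x => ?_
  simp [gradeInvolution, creation_apply]

theorem gradeInvolution_mul_annihilation (d : Module.Dual R M) :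
    gradeInvolution R M * annihilation d = -(annihilation d * gradeInvolution R M) :=
  LinearMap.ext (CliffordAlgebra.involute_contractLeft d)

theorem commute_gradeInvolution_creation_mul_annihilation (w : M) (d : Module.Dual R M) :
    Commute (gradeInvolution R M) (creation w * annihilation d) :=
  commute_mul_of_anticommute (gradeInvolution_mul_creation w) (gradeInvolution_mul_annihilation d)

theorem commute_creation_creation_mul_annihilation {u : M} {d : Module.Dual R M} (hd : d u = 0)
    (w : M) : Commute (creation u) (creation w * annihilation d) := by
  refine commute_mul_of_anticommute (creation_mul_creation u w) ?_
  rw [annihilation_mul_creation, hd, zero_smul, zero_sub, neg_neg]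

theorem creation_mul_annihilation_commutator (w : M) (d : Module.Dual R M) (m : M) :
    creation w * annihilation d * creation m - creation m * (creation w * annihilation d) =
      d m • creation w := by
  rw [mul_assoc, annihilation_mul_creation, mul_sub, mul_smul_comm, mul_one, ← mul_assoc,
    creation_mul_creation, neg_mul (α := Module.End R (ExteriorAlgebra R M)), sub_neg_eq_add,
    mul_assoc, add_sub_cancel_right]

theorem ext_of_map_one_of_commutator_creation {D D' : Module.End R (ExteriorAlgebra R M)}
    (h₁ : D 1 = D' 1)
    (hc : ∀ m, D * creation m - creation m * D = D' * creation m - creation m * D') :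
    D = D' := by
  refine LinearMap.ext fun x => ?_
  induction x using CliffordAlgebra.left_induction with
  | algebraMap r => rw [Algebra.algebraMap_eq_smul_one, map_smul, map_smul, h₁]
  | add x y hx hy => rw [map_add, map_add, hx, hy]
  | ι_mul x m hx =>
    have h := congrArg (· x) (hc m)
    simp only [LinearMap.sub_apply, Module.End.mul_apply, creation_apply, hx] at h
    exact sub_left_injective h

section Basis

variable {κ : Type*} [Fintype κ]

noncomputable def basisDerivation (e : Module.Basis κ R M) (T : Module.End R M) :
    Module.End R (ExteriorAlgebra R M) :=
  ∑ p, creation (T (e p)) * annihilation (e.coord p)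

theorem basisDerivation_commutator_creation (e : Module.Basis κ R M) (T : Module.End R M)
    (m : M) :
    basisDerivation e T * creation m - creation m * basisDerivation e T = creation (T m) := by
  simp only [basisDerivation, Finset.sum_mul, Finset.mul_sum, ← Finset.sum_sub_distrib,
    creation_mul_annihilation_commutator, ← map_smul, ← map_sum, Module.Basis.coord_apply,
    e.sum_repr]

theorem eq_basisDerivation (e : Module.Basis κ R M) (T : Module.End R M)
    (D : Module.End R (ExteriorAlgebra R M))
    (hder : ∀ x y : ExteriorAlgebra R M, D (x * y) = D x * y + x * D y)
    (hext : ∀ v : M, D (ι R v) = ι R (T v)) :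
    D = basisDerivation e T := by
  refine ext_of_map_one_of_commutator_creation ?_ fun m => ?_
  · have h := hder 1 1
    simp only [mul_one, one_mul, left_eq_add] at h
    simp [h, basisDerivation, annihilation_apply]
  · rw [basisDerivation_commutator_creation]
    refine LinearMap.ext fun x => ?_
    simp [creation_apply, hder, hext]

end Basis

end ExteriorAlgebra

open ExteriorAlgebra

section Supertrace

variable {V : Type*} [AddCommGroup V] [Module ℝ V]

theorem supertrace_eq_trace_mul (S : Module.End ℝ (ExteriorAlgebra ℝ V)) :
    supertrace V S = LinearMap.trace ℝ _ (gradeInvolution ℝ V * S) := rfl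

theorem supertrace_add (S₁ S₂ : Module.End ℝ (ExteriorAlgebra ℝ V)) :
    supertrace V (S₁ + S₂) = supertrace V S₁ + supertrace V S₂ := by
  simp only [supertrace_eq_trace_mul, mul_add, map_add]

theorem supertrace_sum {α : Type*} (s : Finset α)
    (S : α → Module.End ℝ (ExteriorAlgebra ℝ V)) :
    supertrace V (∑ a ∈ s, S a) = ∑ a ∈ s, supertrace V (S a) := by
  simp only [supertrace_eq_trace_mul, Finset.mul_sum, map_sum]

theorem supertrace_mul_of_anticommute {X : Module.End ℝ (ExteriorAlgebra ℝ V)}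
    (hX : gradeInvolution ℝ V * X = -(X * gradeInvolution ℝ V))
    (Y : Module.End ℝ (ExteriorAlgebra ℝ V)) :
    supertrace V (X * Y) = -supertrace V (Y * X) := by
  -- `rw` cannot infer the ring structure of `Module.End` of an algebra, hence the explicit `α`.
  rw [supertrace_eq_trace_mul, supertrace_eq_trace_mul, ← mul_assoc, hX,
    neg_mul (α := Module.End ℝ (ExteriorAlgebra ℝ V)), mul_assoc, map_neg,
    LinearMap.trace_mul_comm, ← mul_assoc]

theorem supertrace_eq_zero_of_commute_creation {A : Module.End ℝ (ExteriorAlgebra ℝ V)} {v : V}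
    {d : Module.Dual ℝ V} (hd : d v = 1) (hA : Commute (gradeInvolution ℝ V) A)
    (hv : Commute (creation v) A) : supertrace V A = 0 := by
  have hodd : gradeInvolution ℝ V * (A * annihilation d) =
      -(A * annihilation d * gradeInvolution ℝ V) := by
    rw [← mul_assoc, hA.eq, mul_assoc, gradeInvolution_mul_annihilation,
      mul_neg (α := Module.End ℝ (ExteriorAlgebra ℝ V)), mul_assoc]
  have hsplit : A = A * annihilation d * creation v + A * creation v * annihilation d := by
    rw [mul_assoc, mul_assoc, ← mul_add, annihilation_mul_creation, hd, one_smul,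
      sub_add_cancel, mul_one]
  rw [hsplit, supertrace_add, supertrace_mul_of_anticommute hodd, ← mul_assoc, hv.eq,
    neg_add_cancel]

theorem supertrace_prod_creation_mul_annihilation_eq_zero {l : ℕ} (w : Fin l → V)
    (d : Fin l → Module.Dual ℝ V) {v : V} {d₀ : Module.Dual ℝ V} (hd₀ : d₀ v = 1)
    (hv : ∀ i, d i v = 0) :
    supertrace V (List.ofFn fun i => creation (w i) * annihilation (d i)).prod = 0 := by
  refine supertrace_eq_zero_of_commute_creation hd₀ ?_ ?_ <;>
    refine Commute.list_prod_right _ _ fun x hx => ?_ <;>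
    obtain ⟨i, rfl⟩ := List.mem_ofFn.mp hx
  · exact commute_gradeInvolution_creation_mul_annihilation _ _
  · exact commute_creation_creation_mul_annihilation (hv i) _

end Supertrace

/-- **Patodi's vanishing lemma.** If `V` has dimension `n`, `T₁, …, T_l` are endomorphisms
of `V` extended to the exterior algebra `⋀^* V` as derivations `D₁, …, D_l`, and `l < n`,
then the supertrace of the composition `D₁ ∘ ⋯ ∘ D_l` vanishes. -/
theorem patodi_vanishing
    (V : Type*) [AddCommGroup V] [Module ℝ V] [FiniteDimensional ℝ V]
    (n l : ℕ) (hdim : Module.finrank ℝ V = n)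
    (T : Fin l → Module.End ℝ V)
    (D : Fin l → Module.End ℝ (ExteriorAlgebra ℝ V))
    (hder : ∀ i (x y : ExteriorAlgebra ℝ V), D i (x * y) = D i x * y + x * D i y)
    (hext : ∀ i (v : V), D i (ExteriorAlgebra.ι ℝ v) = ExteriorAlgebra.ι ℝ (T i v))
    (hl : l < n) :
    supertrace V ((List.ofFn D).prod) = 0 := by
  let e : Module.Basis (Fin n) ℝ V := (Module.finBasis ℝ V).reindex (finCongr hdim)
  obtain rfl : D = fun i => basisDerivation e (T i) :=
    funext fun i => eq_basisDerivation e (T i) (D i) (hder i) (hext i)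
  simp only [basisDerivation, List.prod_ofFn_sum, supertrace_sum]
  refine Finset.sum_eq_zero fun f _ => ?_
  obtain ⟨j, hj⟩ : ∃ j, ∀ i, f i ≠ j := by
    simpa [Function.Surjective] using fun h => (Fin.le_of_surjective f h).not_gt hl
  have hcoord : e.coord j (e j) = 1 := by simp
  refine supertrace_prod_creation_mul_annihilation_eq_zero _ _ hcoord fun i => ?_
  rw [e.coord_apply, e.repr_self, Finsupp.single_eq_of_ne (hj i)]
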